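/- arXiv:1510.07105 — 3 statements merged into one kernel-verified Lean document; each statement's English description precedes it below -/
import Mathlib

section
/- Let V : ℝ² → ℝ² be continuous and suppose there exists γ > 0 such that for all 0 ≤ s < s' ≤ T, ‖(1/(s'-s)) ∫ₛ^{s'} V(X_{x₀}(t)) dt‖ ≥ γ, where X_{x₀} solves X' = V(X), X(0) = x₀. Then for any x ∈ ℝ² and h > 0, the Lebesgue measure of the set A = {s ∈ [0,T] : ‖X_{x₀}(s) - x‖ ≤ h} is at most 2h/γ. -/
open MeasureTheory

theorem Real.volume_le_ofReal_of_forall_lt_sub_le {s : Set ℝ} {d : ℝ} (hd₀ : 0 ≤ d)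
    (hd : ∀ a ∈ s, ∀ b ∈ s, a < b → b - a ≤ d) : volume s ≤ ENNReal.ofReal d := by
  refine (Real.volume_le_diam s).trans (Metric.ediam_le_of_forall_dist_le fun a ha b hb => ?_)
  rcases lt_trichotomy a b with hab | rfl | hab
  · rw [Real.dist_eq, abs_sub_comm, abs_of_pos (sub_pos.2 hab)]
    exact hd a ha b hb hab
  · simpa using hd₀
  · rw [Real.dist_eq, abs_of_pos (sub_pos.2 hab)]
    exact hd b hb a ha hab

theorem mul_le_norm_of_le_norm_one_div_smul {E : Type*} [NormedAddCommGroup E] [NormedSpace ℝ E]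
    {γ c : ℝ} {v : E} (hc : 0 < c) (h : γ ≤ ‖(1 / c) • v‖) : γ * c ≤ ‖v‖ := by
  rwa [norm_smul, Real.norm_of_nonneg (one_div_nonneg.2 hc.le), one_div_mul_eq_div,
    le_div_iff₀ hc] at h

theorem stmt_8_general (T γ : ℝ) (hγ : 0 < γ)
    (V : EuclideanSpace ℝ (Fin 2) → EuclideanSpace ℝ (Fin 2))
    (X : ℝ → EuclideanSpace ℝ (Fin 2))
    (hX : ∀ s s' : ℝ, 0 ≤ s → s ≤ s' → s' ≤ T →
      X s' - X s = ∫ t in s..s', V (X t))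
    (havg : ∀ s s' : ℝ, 0 ≤ s → s < s' → s' ≤ T →
      γ ≤ ‖(1 / (s' - s)) • ∫ t in s..s', V (X t)‖)
    (x : EuclideanSpace ℝ (Fin 2)) (h : ℝ) (hh : 0 < h) :
    volume {s | s ∈ Set.Icc 0 T ∧ ‖X s - x‖ ≤ h} ≤ ENNReal.ofReal (2 * h / γ) := by
  refine Real.volume_le_ofReal_of_forall_lt_sub_le (by positivity)
    fun a ⟨⟨ha₀, _⟩, hax⟩ b ⟨⟨_, hbT⟩, hbx⟩ hab => ?_
  have hγab := havg a b ha₀ hab hbT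
  rw [← hX a b ha₀ hab.le hbT] at hγab
  rw [le_div_iff₀' hγ]
  calc γ * (b - a) ≤ ‖X b - X a‖ := mul_le_norm_of_le_norm_one_div_smul (sub_pos.2 hab) hγab
    _ ≤ ‖X b - x‖ + ‖X a - x‖ := by
      simpa only [dist_eq_norm] using dist_triangle_right (X b) (X a) x
    _ ≤ 2 * h := by linarith

theorem stmt_8 (T γ : ℝ) (hT : 0 ≤ T) (hγ : 0 < γ)
    (V : EuclideanSpace ℝ (Fin 2) → EuclideanSpace ℝ (Fin 2)) (hV : Continuous V)
    (X : ℝ → EuclideanSpace ℝ (Fin 2))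
    (hX : ∀ s s' : ℝ, 0 ≤ s → s ≤ s' → s' ≤ T →
      X s' - X s = ∫ t in s..s', V (X t))
    (havg : ∀ s s' : ℝ, 0 ≤ s → s < s' → s' ≤ T →
      γ ≤ ‖(1 / (s' - s)) • ∫ t in s..s', V (X t)‖)
    (x : EuclideanSpace ℝ (Fin 2)) (h : ℝ) (hh : 0 < h) :
    volume {s | s ∈ Set.Icc 0 T ∧ ‖X s - x‖ ≤ h} ≤ ENNReal.ofReal (2 * h / γ) :=
  stmt_8_general T γ hγ V X hX havg x h hh
end

section
/- Let b₁ > 1 and define, for a = (A₁, A₂, A₃) ∈ ℝ³ with a ≠ 0, the symmetric 2×2 matrix Ω with entries ω₁₁ = b₁A₁² + A₂² + A₃² + 2A₁A₃, ω₁₂ = ω₂₁ = 2A₁A₂ + 2A₂A₃, ω₂₂ = b₁A₃² + A₂² + A₁² + 2A₁A₃. Then Ω is positive definite provided (A₁ + A₃, A₂) ≠ (0,0) or (A₁, A₃) ≠ (0,0); in particular Ω is positive definite whenever a ≠ 0. -/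
/-!
The quadratic form of `Ω` is a sum of squares,
`Q(u, v) = (b₁ - 1) (A₁ u)² + (b₁ - 1) (A₃ v)² + ((A₁ + A₃) u + A₂ v)² + (A₂ u + (A₁ + A₃) v)²`.
If it vanished at some `(u, v) ≠ 0`, say `u ≠ 0` (the case `v ≠ 0` is the same after swapping
`u ↔ v` and `A₁ ↔ A₃`), the first square would force `A₁ = 0` and the last two then `A₂ = A₃ = 0`.
-/

lemma Matrix.posDef_of_fin_two {R : Type*} [CommRing R] [PartialOrder R] [StarRing R]
    [TrivialStar R] {a b c : R}
    (h : ∀ u v : R, u ≠ 0 ∨ v ≠ 0 → 0 < u * (a * u + b * v) + v * (b * u + c * v)) :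
    (Matrix.of ![![a, b], ![b, c]]).PosDef := by
  refine Matrix.PosDef.of_dotProduct_mulVec_pos ?_ fun x hx ↦ ?_
  · ext i j
    fin_cases i <;> fin_cases j <;> simp
  · have hx' : x 0 ≠ 0 ∨ x 1 ≠ 0 := by
      by_contra! h0
      exact hx (funext fun i ↦ by fin_cases i <;> simp [h0.1, h0.2])
    simpa [dotProduct, Matrix.mulVec, Fin.sum_univ_two] using h (x 0) (x 1) hx'

lemma eq_zero_of_linear_forms_eq_zero {A₁ A₂ A₃ u v : ℝ} (hu : u ≠ 0)
    (h₁ : A₁ * u = 0) (h₃ : A₃ * v = 0) (h₁₃ : (A₁ + A₃) * u + A₂ * v = 0)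
    (h₂ : A₂ * u + (A₁ + A₃) * v = 0) : A₁ = 0 ∧ A₂ = 0 ∧ A₃ = 0 := by
  have hA₁ : A₁ = 0 := (mul_eq_zero.mp h₁).resolve_right hu
  subst hA₁
  have hA₃ : A₃ = 0 := by
    have : A₃ * u ^ 2 = 0 := by linear_combination u * h₁₃ - v * h₂ + v * h₃
    exact (mul_eq_zero.mp this).resolve_right (pow_ne_zero 2 hu)
  subst hA₃
  exact ⟨rfl, (mul_eq_zero.mp (by simpa using h₂ : A₂ * u = 0)).resolve_right hu, rfl⟩

lemma sum_sq_pos_of_ne_zero {b A₁ A₂ A₃ u v : ℝ} (hb : 1 < b) (hA : ¬(A₁ = 0 ∧ A₂ = 0 ∧ A₃ = 0))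
    (huv : u ≠ 0 ∨ v ≠ 0) :
    0 < (b - 1) * (A₁ * u) ^ 2 + (b - 1) * (A₃ * v) ^ 2
      + ((A₁ + A₃) * u + A₂ * v) ^ 2 + (A₂ * u + (A₁ + A₃) * v) ^ 2 := by
  have hb' : 0 < b - 1 := sub_pos.mpr hb
  by_contra! hQ
  have hQ₀ := le_antisymm hQ (by positivity)
  rw [add_eq_zero_iff_of_nonneg (by positivity) (by positivity),
    add_eq_zero_iff_of_nonneg (by positivity) (by positivity),
    add_eq_zero_iff_of_nonneg (by positivity) (by positivity)] at hQ₀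
  simp only [mul_eq_zero_iff_left hb'.ne', pow_eq_zero_iff two_ne_zero] at hQ₀
  obtain ⟨⟨⟨h₁, h₃⟩, h₁₃⟩, h₂⟩ := hQ₀
  rcases huv with hu | hv
  · exact hA (eq_zero_of_linear_forms_eq_zero hu h₁ h₃ h₁₃ h₂)
  · obtain ⟨hA₃, hA₂, hA₁⟩ := eq_zero_of_linear_forms_eq_zero (A₂ := A₂) hv h₃ h₁
      (by linear_combination h₂) (by linear_combination h₁₃)
    exact hA ⟨hA₁, hA₂, hA₃⟩

theorem stmt_10 (b₁ : ℝ) (hb : 1 < b₁) (A₁ A₂ A₃ : ℝ)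
    (hA : ¬(A₁ = 0 ∧ A₂ = 0 ∧ A₃ = 0)) :
    Matrix.PosDef
      (Matrix.of ![![b₁ * A₁^2 + A₂^2 + A₃^2 + 2 * A₁ * A₃,
                    2 * A₁ * A₂ + 2 * A₂ * A₃],
                  ![2 * A₁ * A₂ + 2 * A₂ * A₃,
                    b₁ * A₃^2 + A₂^2 + A₁^2 + 2 * A₁ * A₃]]) := by
  exact Matrix.posDef_of_fin_two fun u v huv ↦
    (sum_sq_pos_of_ne_zero hb hA huv).trans_eq (by ring)
end

section
/- For δ > 0 there exist finitely many open balls B₁, …, B_N contained in the open unit ball B(0,1) ⊂ ℝ² such that for every y ∈ ℝ² with ‖y‖ > δ, at least one ball B_i is contained in B(0,1) \ B(-y,1). -/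
/-!
Cover the unit sphere by finitely many balls `B(p, ε)`. Given `y`, pick a net point `p` within `ε`
of the direction `u = y / ‖y‖`; the ball `B((1 - ε) p, ε)` lies in the unit ball, and its center is
at distance more than `(1 - ε) + ‖y‖ - ε ≥ 1 + ε` from `-y`, because `(1 - ε) u` and `y` point the
same way. This needs `‖y‖ ≥ 3ε`, so `ε = min δ 1 / 3` works.
-/

open Metric

section

variable {E : Type*} [NormedAddCommGroup E] [NormedSpace ℝ E]

lemma lt_norm_smul_add_smul_of_norm_sub_lt {u p : E} {s t ε : ℝ} (hu : ‖u‖ = 1) (hs : 0 ≤ s)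
    (ht₀ : 0 ≤ t) (ht₁ : t ≤ 1) (hp : ‖p - u‖ < ε) :
    t + s - ε < ‖t • p + s • u‖ := by
  have hsum : ‖t • u + s • u‖ = t + s := by
    rw [← add_smul, norm_smul, hu, mul_one, Real.norm_of_nonneg (add_nonneg ht₀ hs)]
  have hshift : ‖t • (p - u)‖ < ε := by
    rw [norm_smul, Real.norm_of_nonneg ht₀]
    exact (mul_le_of_le_one_left (norm_nonneg _) ht₁).trans_lt hp
  have htri := norm_sub_le (t • p + s • u) (t • (p - u))
  rw [show t • p + s • u - t • (p - u) = t • u + s • u by module, hsum] at htri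
  linarith

lemma ball_smul_subset_ball_zero_one {p : E} (hp : ‖p‖ = 1) {ε : ℝ} (hε : ε ≤ 1) :
    ball ((1 - ε) • p) ε ⊆ ball 0 1 :=
  ball_subset_ball' <| by
    rw [dist_zero_right, norm_smul, hp, mul_one, Real.norm_of_nonneg (sub_nonneg.2 hε)]
    linarith

lemma ball_smul_subset_ball_zero_one_diff {u p : E} (hu : ‖u‖ = 1) (hp : ‖p‖ = 1) {s ε : ℝ}
    (hε₀ : 0 ≤ ε) (hε₁ : ε ≤ 1) (hs : 3 * ε ≤ s) (hpu : ‖p - u‖ < ε) :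
    ball ((1 - ε) • p) ε ⊆ ball 0 1 \ ball (-(s • u)) 1 := by
  refine Set.subset_sdiff.2 ⟨ball_smul_subset_ball_zero_one hp hε₁, ball_disjoint_ball ?_⟩
  have hfar := lt_norm_smul_add_smul_of_norm_sub_lt (s := s) hu (by linarith) (sub_nonneg.2 hε₁)
    (by linarith) hpu
  rw [dist_eq_norm, sub_neg_eq_add]
  linarith

theorem exists_finite_balls_subset_ball_zero_one_diff [ProperSpace E] {δ : ℝ} (hδ : 0 < δ) :
    ∃ (S : Set E) (ε : ℝ), S.Finite ∧ 0 < ε ∧ (∀ c ∈ S, ball c ε ⊆ ball 0 1) ∧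
      ∀ y : E, δ < ‖y‖ → ∃ c ∈ S, ball c ε ⊆ ball 0 1 \ ball (-y) 1 := by
  set ε := min δ 1 / 3 with hε_def
  have hε₀ : 0 < ε := by positivity
  have hε₁ : ε ≤ 1 := by rw [hε_def]; linarith [min_le_right δ 1]
  obtain ⟨net, hnet_sphere, hnet_fin, hnet_cover⟩ :=
    (isCompact_sphere (0 : E) 1).finite_cover_balls hε₀
  have hnorm : ∀ p ∈ net, ‖p‖ = 1 := fun p hp => by simpa using hnet_sphere hp
  refine ⟨(fun p => (1 - ε) • p) '' net, ε, hnet_fin.image _, hε₀, ?_, fun y hy => ?_⟩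
  · rintro _ ⟨p, hp, rfl⟩
    exact ball_smul_subset_ball_zero_one (hnorm p hp) hε₁
  have hy₀ : y ≠ 0 := norm_pos_iff.1 (hδ.trans hy)
  set u := ‖y‖⁻¹ • y
  have hu : ‖u‖ = 1 := norm_smul_inv_norm hy₀
  obtain ⟨p, hp, hpu⟩ := Set.mem_iUnion₂.1 (hnet_cover (by simpa using hu))
  refine ⟨_, ⟨p, hp, rfl⟩, ?_⟩
  have hyu : ‖y‖ • u = y := smul_inv_smul₀ (norm_ne_zero_iff.2 hy₀) y
  rw [← hyu]
  exact ball_smul_subset_ball_zero_one_diff hu (hnorm p hp) hε₀.le hε₁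
    (by rw [hε_def]; linarith [min_le_left δ 1]) (by rwa [mem_ball', dist_eq_norm] at hpu)

end

theorem stmt_18 (δ : ℝ) (hδ : 0 < δ) :
    ∃ (N : ℕ) (c : Fin N → EuclideanSpace ℝ (Fin 2)) (r : Fin N → ℝ),
      (∀ i, 0 < r i ∧ ball (c i) (r i) ⊆ ball (0 : EuclideanSpace ℝ (Fin 2)) 1) ∧
      ∀ y : EuclideanSpace ℝ (Fin 2), δ < ‖y‖ →
        ∃ i, ball (c i) (r i) ⊆ ball (0 : EuclideanSpace ℝ (Fin 2)) 1 \ ball (-y) 1 := by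
  obtain ⟨S, ε, hS, hε, hS_sub, hS_diff⟩ := exists_finite_balls_subset_ball_zero_one_diff
    (E := EuclideanSpace ℝ (Fin 2)) hδ
  have := hS.to_subtype
  let e := Finite.equivFin S
  refine ⟨Nat.card S, fun i => e.symm i, fun _ => ε,
    fun i => ⟨hε, hS_sub _ (e.symm i).2⟩, fun y hy => ?_⟩
  obtain ⟨c, hc, hball⟩ := hS_diff y hy
  exact ⟨e ⟨c, hc⟩, by simpa only [Equiv.symm_apply_apply] using hball⟩
end
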